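/- arXiv:1509.04045 — 7 statements merged into one kernel-verified Lean document; each statement's English description precedes it below -/
import Mathlib

section
/- Let 𝒜 be a generalized connection structure on k nodes with connection graph Γ_𝒜, and for each α ∈ 𝒜 let f^α = (f_1^α,…,f_k^α) be a family of maps f_i^α : ℝ^{d_1} × ⋯ × ℝ^{d_k} → ℝ^{d_i}. Assume the network is input consistent: for all nodes i and all α, β ∈ 𝒜, if J(i,α) = J(i,β) then f_i^α = f_i^β. Then the network is dynamically decomposable: for every connected component C of Γ_𝒜, every i ∈ C, and all α, β ∈ 𝒜 with π_C(α) = π_C(β), one has f_i^α = f_i^β. -/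
open Set

/-- A connection structure on `k` nodes: a `k × (k+1)` 0-1 matrix with rows indexed by
the nodes `Fin k` and columns indexed by `Option (Fin k)` (with `none` the constraint
column `0` and `some j` the column of node `j`), such that the diagonal entries vanish.
Entries are encoded as propositions (`true = 1`). -/
structure ConnStr (k : ℕ) where
  rel : Fin k → Option (Fin k) → Prop
  diag : ∀ i : Fin k, ¬ rel i (some i)

/-- The join `α ∨ β` of two connection structures (entrywise maximum). -/
def ConnStr.join {k : ℕ} (α β : ConnStr k) : ConnStr k where
  rel i j := α.rel i j ∨ β.rel i j
  diag i h := h.elim (α.diag i) (β.diag i)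

/-- The dependency set `J(i,α) = {j ∈ {0,1,…,k} : α_{ij} = 1}` of node `i` under `α`. -/
def ConnStr.J {k : ℕ} (α : ConnStr k) (i : Fin k) : Set (Option (Fin k)) :=
  {j | α.rel i j}

/-- The projection `π_C(α)` of a connection structure to a set `C` of nodes: keep the
entries `α_{ij}` with `i ∈ C` and `j ∈ C ∪ {0}`, and set all other entries to `0`. -/
def ConnStr.projC {k : ℕ} (C : Set (Fin k)) (α : ConnStr k) : ConnStr k where
  rel i j := i ∈ C ∧ (j = none ∨ ∃ c ∈ C, j = some c) ∧ α.rel i j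
  diag i h := α.diag i h.2.2

/-- The connection graph `Γ_𝒜` of a generalized connection structure `𝒜`: the undirected
simple graph on the nodes `{1,…,k}` with an edge between distinct `i, j` iff `α_{ij} = 1`
or `α_{ji} = 1` for some `α ∈ 𝒜`. -/
def connGraph {k : ℕ} (𝒜 : Set (ConnStr k)) : SimpleGraph (Fin k) :=
  SimpleGraph.fromRel (fun i j => ∃ α ∈ 𝒜, α.rel i (some j))

/-- Input consistent asynchronous networks are dynamically
decomposable: if `C` is the connected component of node `i` in the connection graph
`Γ_𝒜` and `α, β ∈ 𝒜` satisfy `π_C(α) = π_C(β)`, then `f_i^α = f_i^β`. -/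
theorem input_consistent_implies_dynamically_decomposable
    {k : ℕ} (d : Fin k → ℕ)
    (𝒜 : Set (ConnStr k)) (h𝒜fin : 𝒜.Finite) (h𝒜ne : 𝒜.Nonempty)
    (f : ConnStr k → ∀ i : Fin k, (∀ j : Fin k, Fin (d j) → ℝ) → (Fin (d i) → ℝ))
    (hic : ∀ i : Fin k, ∀ α ∈ 𝒜, ∀ β ∈ 𝒜, α.J i = β.J i → f α i = f β i) :
    ∀ i : Fin k, ∀ α ∈ 𝒜, ∀ β ∈ 𝒜,
      ConnStr.projC {j : Fin k | (connGraph 𝒜).Reachable i j} α =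
        ConnStr.projC {j : Fin k | (connGraph 𝒜).Reachable i j} β →
      f α i = f β i := by
  intro i α hα β hβ hproj
  set C : Set (Fin k) := {j : Fin k | (connGraph 𝒜).Reachable i j} with hC
  have hiC : i ∈ C := SimpleGraph.Reachable.refl i
  have key : ∀ γ ∈ 𝒜, ∀ j, γ.rel i j →
      (ConnStr.projC C γ).rel i j := by
    intro γ hγ j hrel
    refine ⟨hiC, ?_, hrel⟩
    cases j with
    | none => exact Or.inl rfl
    | some c =>
      refine Or.inr ⟨c, ?_, rfl⟩
      have hne : i ≠ c := fun h => γ.diag i (h ▸ hrel)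
      exact SimpleGraph.Adj.reachable ⟨hne, Or.inl ⟨γ, hγ, hrel⟩⟩
  apply hic i α hα β hβ
  ext j
  constructor
  · intro h
    have := key α hα j h
    rw [hproj] at this
    exact this.2.2
  · intro h
    have := key β hβ j h
    rw [← hproj] at this
    exact this.2.2
end

section
/- Let 𝒜 be a generalized connection structure on k nodes with phase spaces ℝ^{d_i} and network phase space M = ∏_{i=1}^k ℝ^{d_i}, and suppose the connection graph Γ_𝒜 has connected components C₁,…,C_q. For each α ∈ 𝒜 let f^α = (f_1^α,…,f_k^α), f_i^α : M → ℝ^{d_i}, be admissible: f_i^α(X) does not depend on the coordinate x_j whenever j ≠ i and α_{ij} = 0. Assume: (structural decomposability) for each ℓ, the value π_{C_ℓ}(ℰ(X)) of the event map ℰ : M → 𝒜 depends only on X_{C_ℓ} = (x_i)_{i∈C_ℓ}; and (dynamical decomposability) for each ℓ, each i ∈ C_ℓ, and all α, β ∈ 𝒜 with π_{C_ℓ}(α) = π_{C_ℓ}(β), f_i^α = f_i^β. Then the network factorizes as a product over the components: there exist event maps ℰ^ℓ from ∏_{i∈C_ℓ} ℝ^{d_i} to π_{C_ℓ}(𝒜)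 and maps g_ℓ^γ : ∏_{i∈C_ℓ} ℝ^{d_i} → ∏_{i∈C_ℓ} ℝ^{d_i} (γ ∈ π_{C_ℓ}(𝒜)) such that the network vector field F(X) = f^{ℰ(X)}(X) satisfies, for every ℓ, every i ∈ C_ℓ and every X ∈ M, F(X)_i = (g_ℓ^{ℰ^ℓ(X_{C_ℓ})}(X_{C_ℓ}))_i. -/
open Set

/-- Modularization over components: a structurally and dynamically
decomposable asynchronous network factorizes as a product over the connected components
`C₁,…,C_q` of its connection graph. There are event maps `ℰ^c` (depending only on
`X_{C_c}` and taking values in `π_{C_c}(𝒜)`) and vector fields `g_c^γ` (depending only on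
`X_{C_c}` in the components indexed by `C_c`) such that the network vector field
`F(X) = f^{ℰ(X)}(X)` satisfies `F(X)_i = (g_c^{ℰ^c(X)}(X))_i` for every component `c` and
every `i ∈ C_c`. -/
theorem modularization_factorization
    {k : ℕ} (d : Fin k → ℕ)
    (𝒜 : Set (ConnStr k)) (h𝒜fin : 𝒜.Finite) (h𝒜ne : 𝒜.Nonempty)
    (f : ConnStr k → ∀ i : Fin k, (∀ j : Fin k, Fin (d j) → ℝ) → (Fin (d i) → ℝ))
    (hadm : ∀ α ∈ 𝒜, ∀ i : Fin k, ∀ X Y : ∀ j : Fin k, Fin (d j) → ℝ,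
      X i = Y i → (∀ j : Fin k, α.rel i (some j) → X j = Y j) → f α i X = f α i Y)
    (ℰ : (∀ j : Fin k, Fin (d j) → ℝ) → ConnStr k) (hℰ : ∀ X, ℰ X ∈ 𝒜)
    (hstruct : ∀ (c : (connGraph 𝒜).ConnectedComponent)
      (X Y : ∀ j : Fin k, Fin (d j) → ℝ),
      (∀ i : Fin k, (connGraph 𝒜).connectedComponentMk i = c → X i = Y i) →
      ConnStr.projC {i : Fin k | (connGraph 𝒜).connectedComponentMk i = c} (ℰ X) =
        ConnStr.projC {i : Fin k | (connGraph 𝒜).connectedComponentMk i = c} (ℰ Y))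
    (hdyn : ∀ (c : (connGraph 𝒜).ConnectedComponent) (i : Fin k),
      (connGraph 𝒜).connectedComponentMk i = c →
      ∀ α ∈ 𝒜, ∀ β ∈ 𝒜,
        ConnStr.projC {i : Fin k | (connGraph 𝒜).connectedComponentMk i = c} α =
          ConnStr.projC {i : Fin k | (connGraph 𝒜).connectedComponentMk i = c} β →
        f α i = f β i) :
    ∃ (ℰℓ : (connGraph 𝒜).ConnectedComponent →
        (∀ j : Fin k, Fin (d j) → ℝ) → ConnStr k)
      (g : (connGraph 𝒜).ConnectedComponent → ConnStr k →
        (∀ j : Fin k, Fin (d j) → ℝ) → ∀ i : Fin k, Fin (d i) → ℝ),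
      (∀ (c : (connGraph 𝒜).ConnectedComponent) (X Y : ∀ j : Fin k, Fin (d j) → ℝ),
        (∀ i : Fin k, (connGraph 𝒜).connectedComponentMk i = c → X i = Y i) →
        ℰℓ c X = ℰℓ c Y) ∧
      (∀ (c : (connGraph 𝒜).ConnectedComponent) (X : ∀ j : Fin k, Fin (d j) → ℝ),
        ∃ α ∈ 𝒜, ℰℓ c X =
          ConnStr.projC {i : Fin k | (connGraph 𝒜).connectedComponentMk i = c} α) ∧
      (∀ (c : (connGraph 𝒜).ConnectedComponent) (γ : ConnStr k)
        (X Y : ∀ j : Fin k, Fin (d j) → ℝ),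
        (∀ i : Fin k, (connGraph 𝒜).connectedComponentMk i = c → X i = Y i) →
        ∀ i : Fin k, (connGraph 𝒜).connectedComponentMk i = c → g c γ X i = g c γ Y i) ∧
      (∀ (c : (connGraph 𝒜).ConnectedComponent) (i : Fin k),
        (connGraph 𝒜).connectedComponentMk i = c →
        ∀ X : ∀ j : Fin k, Fin (d j) → ℝ, f (ℰ X) i X = g c (ℰℓ c X) X i) := by
  classical
  set G := connGraph 𝒜 with hG
  refine ⟨fun c X => ConnStr.projC {i : Fin k | G.connectedComponentMk i = c} (ℰ X),
    fun c γ X i =>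
      if h : ∃ α ∈ 𝒜, ConnStr.projC {i : Fin k | G.connectedComponentMk i = c} α = γ then
        f h.choose i (fun j => if G.connectedComponentMk j = c then X j else 0)
      else 0, ?_, ?_, ?_, ?_⟩
  · intro c X Y hXY
    exact hstruct c X Y hXY
  · intro c X
    exact ⟨ℰ X, hℰ X, rfl⟩
  · intro c γ X Y hXY i _
    simp only
    have : (fun j => if G.connectedComponentMk j = c then X j else 0) =
        (fun j => if G.connectedComponentMk j = c then Y j else 0) := by
      funext j
      by_cases hj : G.connectedComponentMk j = c
      · simp [hj, hXY j hj]
      · simp [hj]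
    rw [this]
  · intro c i hi X
    have hex : ∃ α ∈ 𝒜, ConnStr.projC {i : Fin k | G.connectedComponentMk i = c} α =
        ConnStr.projC {i : Fin k | G.connectedComponentMk i = c} (ℰ X) :=
      ⟨ℰ X, hℰ X, rfl⟩
    simp only [dif_pos hex]
    obtain ⟨hαmem, hαproj⟩ := hex.choose_spec
    have hfeq : f hex.choose i = f (ℰ X) i :=
      hdyn c i hi hex.choose hαmem (ℰ X) (hℰ X) hαproj
    rw [hfeq]
    apply hadm (ℰ X) (hℰ X) i
    · simp [hi]
    · intro j hj
      have hji : j ≠ i := fun h => (ℰ X).diag i (h ▸ hj)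
      have hadj : G.Adj i j := by
        rw [hG]
        exact ⟨hji.symm, Or.inl ⟨ℰ X, hℰ X, hj⟩⟩
      have hjc : G.connectedComponentMk j = c := by
        rw [← hi]
        exact (SimpleGraph.ConnectedComponent.sound hadj.reachable).symm
      simp [hjc]
end

section
/- Let two asynchronous networks be given on ℝ^m and ℝ^n, with finite index sets 𝒜_A, 𝒜_B, vector fields f_A^α (α ∈ 𝒜_A), f_B^β (β ∈ 𝒜_B), event maps ℰ_A, ℰ_B, and network vector fields F_A, F_B. Form the product asynchronous network on ℝ^{m+n} with index set 𝒜_A × 𝒜_B, vector fields f^{(α,β)}(X_A, X_B) = (f_A^α(X_A), f_B^β(X_B)), and event map ℰ(X_A, X_B) = (ℰ_A(X_A), ℰ_B(X_B)); its network vector field is F(X_A, X_B) = (F_A(X_A), F_B(X_B)). If φ_A : [0,∞) → ℝ^m and φ_B : [0,∞) → ℝ^n are complete integral curves of F_A and F_B respectively, then (φ_A, φ_B) : [0,∞) → ℝ^{m+n} is a complete integral curve of F. In particular, if both factor networks are proper (a complete integral curve exists through every point), then so is the product network. -/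
open Set Filter Topology

/-- The domain `[0, T)`, where `T ∈ (0, ∞]` is encoded as an `EReal`. -/
def eDom (T : EReal) : Set ℝ := {t : ℝ | 0 ≤ t ∧ (t : EReal) < T}

/-- `φ` is an integral curve of the (possibly discontinuous) vector field `F` on `[0,T)`
with initial condition `X₀`: `φ` is continuous on `[0,T)`, `φ 0 = X₀`, and there is a
closed countable subset `D` of `[0,T)` containing `0` such that for every `u ∈ D` there is
`v ∈ D ∪ {T}` with `v > u`, `(u,v) ∩ D = ∅`, `φ` is `C¹` on `(u,v)` with `φ' = F ∘ φ`
there, and `φ'(t) → F(φ(u))` as `t → u+`; moreover, the intervals `[u,v)` cover `[0,T)`. -/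
def IsNetIntegralCurve {E : Type*} [NormedAddCommGroup E] [NormedSpace ℝ E]
    (F : E → E) (X₀ : E) (T : EReal) (φ : ℝ → E) : Prop :=
  0 < T ∧ φ 0 = X₀ ∧ ContinuousOn φ (eDom T) ∧
  ∃ D : Set ℝ, D.Countable ∧ (0 : ℝ) ∈ D ∧ D ⊆ eDom T ∧ closure D ∩ eDom T ⊆ D ∧
    (∀ u ∈ D, ∃ v : EReal, ((∃ w ∈ D, (w : EReal) = v) ∨ v = T) ∧ (u : EReal) < v ∧
      (∀ w ∈ D, (u : EReal) < (w : EReal) → v ≤ (w : EReal)) ∧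
      (∀ t : ℝ, (u : EReal) < (t : EReal) → (t : EReal) < v → HasDerivAt φ (F (φ t)) t) ∧
      ContinuousOn (fun t => F (φ t)) {t : ℝ | (u : EReal) < (t : EReal) ∧ (t : EReal) < v} ∧
      Tendsto (fun t => F (φ t)) (𝓝[>] u) (𝓝 (F (φ u)))) ∧
    (∀ t ∈ eDom T, ∃ u ∈ D, u ≤ t ∧ Ioc u t ∩ D = ∅)

/-- The amenability trajectory condition: through every point `X` there is an integral
curve of the network vector field, defined on some interval `[0, t(X))` with `t(X) > 0`,
that stays in the event set `E^{ℰ(X)}` of `X`. -/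
def AmenableTraj {E A : Type*} [NormedAddCommGroup E] [NormedSpace ℝ E]
    (f : A → E → E) (ℰ : E → A) : Prop :=
  ∀ X : E, ∃ tX : ℝ, 0 < tX ∧ ∃ φ : ℝ → E,
    IsNetIntegralCurve (fun Y => f (ℰ Y) Y) X (tX : EReal) φ ∧
    ∀ t : ℝ, 0 ≤ t → t < tX → ℰ (φ t) = ℰ X

/-!
The product curve switches exactly when one of its factors does, so its switching set is the
union `D_A ∪ D_B` of theirs. Every `u ∈ [0, T)` sits inside a smooth piece `[u, v_A)` of `φ_A`
and `[u, v_B)` of `φ_B`, so on `[u, min v_A v_B)` both components solve their equations, and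
the last switching time of the product before `t` is the larger of the two factors' ones.
-/

/-- The clause that `IsNetIntegralCurve` imposes on each `u ∈ D`, with `v` the next point
of `D ∪ {T}`. -/
def IsNetPiece {E : Type*} [NormedAddCommGroup E] [NormedSpace ℝ E]
    (F : E → E) (φ : ℝ → E) (D : Set ℝ) (T : EReal) (u : ℝ) (v : EReal) : Prop :=
  ((∃ w ∈ D, (w : EReal) = v) ∨ v = T) ∧ (u : EReal) < v ∧
    (∀ w ∈ D, (u : EReal) < (w : EReal) → v ≤ (w : EReal)) ∧
    (∀ t : ℝ, (u : EReal) < (t : EReal) → (t : EReal) < v → HasDerivAt φ (F (φ t)) t) ∧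
    ContinuousOn (fun t => F (φ t)) {t : ℝ | (u : EReal) < (t : EReal) ∧ (t : EReal) < v} ∧
    Tendsto (fun t => F (φ t)) (𝓝[>] u) (𝓝 (F (φ u)))

section

variable {E G : Type*} [NormedAddCommGroup E] [NormedSpace ℝ E]
  [NormedAddCommGroup G] [NormedSpace ℝ G]

lemma IsNetPiece.of_le {F : E → E} {φ : ℝ → E} {D : Set ℝ} {T : EReal} {u₀ u : ℝ}
    {v : EReal} (h : IsNetPiece F φ D T u₀ v) (hle : u₀ ≤ u) (hgap : Ioc u₀ u ∩ D = ∅)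
    (huT : (u : EReal) < T) : IsNetPiece F φ D T u v := by
  obtain ⟨hv, hu₀v, hnext, hderiv, hcont, htendsto⟩ := h
  have hle' : (u₀ : EReal) ≤ u := by exact_mod_cast hle
  have huv : (u : EReal) < v := by
    rcases hv with ⟨w, hw, rfl⟩ | rfl
    · have hu₀w : u₀ < w := by exact_mod_cast hu₀v
      have hwu : ¬ w ≤ u := fun hwu =>
        (eq_empty_iff_forall_notMem.mp hgap) w ⟨⟨hu₀w, hwu⟩, hw⟩
      exact_mod_cast lt_of_not_ge hwu
    · exact huT
  have hsub : {t : ℝ | (u : EReal) < t ∧ (t : EReal) < v} ⊆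
      {t : ℝ | (u₀ : EReal) < t ∧ (t : EReal) < v} := fun t ht => ⟨hle'.trans_lt ht.1, ht.2⟩
  refine ⟨hv, huv, fun w hw huw => hnext w hw (hle'.trans_lt huw),
    fun t ht hv' => hderiv t (hle'.trans_lt ht) hv', hcont.mono hsub, ?_⟩
  rcases hle.eq_or_lt with rfl | hlt
  · exact htendsto
  · have hopen : IsOpen {t : ℝ | (u₀ : EReal) < t ∧ (t : EReal) < v} :=
      isOpen_Ioo.preimage continuous_coe_real_ereal
    have hmem : u ∈ {t : ℝ | (u₀ : EReal) < t ∧ (t : EReal) < v} :=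
      ⟨by exact_mod_cast hlt, huv⟩
    exact (hcont.continuousAt (hopen.mem_nhds hmem)).tendsto.mono_left nhdsWithin_le_nhds

lemma IsNetPiece.prod {FA : E → E} {FB : G → G} {φA : ℝ → E} {φB : ℝ → G}
    {DA DB : Set ℝ} {T : EReal} {u : ℝ} {vA vB : EReal}
    (hA : IsNetPiece FA φA DA T u vA) (hB : IsNetPiece FB φB DB T u vB) :
    IsNetPiece (Prod.map FA FB) (fun t => (φA t, φB t)) (DA ∪ DB) T u (min vA vB) := by
  obtain ⟨hvA, huvA, hnextA, hderivA, hcontA, htendstoA⟩ := hA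
  obtain ⟨hvB, huvB, hnextB, hderivB, hcontB, htendstoB⟩ := hB
  have hsubA : {t : ℝ | (u : EReal) < t ∧ (t : EReal) < min vA vB} ⊆
      {t : ℝ | (u : EReal) < t ∧ (t : EReal) < vA} :=
    fun t ht => ⟨ht.1, ht.2.trans_le (min_le_left _ _)⟩
  have hsubB : {t : ℝ | (u : EReal) < t ∧ (t : EReal) < min vA vB} ⊆
      {t : ℝ | (u : EReal) < t ∧ (t : EReal) < vB} :=
    fun t ht => ⟨ht.1, ht.2.trans_le (min_le_right _ _)⟩
  refine ⟨?_, lt_min huvA huvB, ?_, fun t ht ht' => ?_, (hcontA.mono hsubA).prodMk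
    (hcontB.mono hsubB), htendstoA.prodMk_nhds htendstoB⟩
  · rcases le_total vA vB with h | h
    · rw [min_eq_left h]
      rcases hvA with ⟨w, hw, hwv⟩ | rfl
      exacts [Or.inl ⟨w, Or.inl hw, hwv⟩, Or.inr rfl]
    · rw [min_eq_right h]
      rcases hvB with ⟨w, hw, hwv⟩ | rfl
      exacts [Or.inl ⟨w, Or.inr hw, hwv⟩, Or.inr rfl]
  · rintro w (hw | hw) huw
    exacts [(min_le_left _ _).trans (hnextA w hw huw),
      (min_le_right _ _).trans (hnextB w hw huw)]
  · exact (hderivA t ht (hsubA ⟨ht, ht'⟩).2).prodMk (hderivB t ht (hsubB ⟨ht, ht'⟩).2)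

end

lemma Ioc_max_inter_union_eq_empty {DA DB : Set ℝ} {uA uB t : ℝ}
    (hA : Ioc uA t ∩ DA = ∅) (hB : Ioc uB t ∩ DB = ∅) :
    Ioc (max uA uB) t ∩ (DA ∪ DB) = ∅ := by
  rw [inter_union_distrib_left, union_empty_iff]
  exact ⟨subset_empty_iff.mp (hA ▸ inter_subset_inter_left _ (Ioc_subset_Ioc_left
    (le_max_left _ _))), subset_empty_iff.mp (hB ▸ inter_subset_inter_left _
    (Ioc_subset_Ioc_left (le_max_right _ _)))⟩

lemma IsNetIntegralCurve.prod {E G : Type*} [NormedAddCommGroup E] [NormedSpace ℝ E]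
    [NormedAddCommGroup G] [NormedSpace ℝ G] {FA : E → E} {FB : G → G} {XA : E} {XB : G}
    {T : EReal} {φA : ℝ → E} {φB : ℝ → G}
    (hA : IsNetIntegralCurve FA XA T φA) (hB : IsNetIntegralCurve FB XB T φB) :
    IsNetIntegralCurve (Prod.map FA FB) (XA, XB) T (fun t => (φA t, φB t)) := by
  obtain ⟨hT, h0A, hcA, DA, hDAc, hDA0, hDAsub, hDAcl, hnextA, hcovA⟩ := hA
  obtain ⟨-, h0B, hcB, DB, hDBc, -, hDBsub, hDBcl, hnextB, hcovB⟩ := hB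
  have hpiece : ∀ u ∈ eDom T, (∃ vA, IsNetPiece FA φA DA T u vA) ∧
      ∃ vB, IsNetPiece FB φB DB T u vB := fun u hu => by
    obtain ⟨uA, huA, huAle, hgapA⟩ := hcovA u hu
    obtain ⟨uB, huB, huBle, hgapB⟩ := hcovB u hu
    obtain ⟨vA, hpA⟩ := hnextA uA huA
    obtain ⟨vB, hpB⟩ := hnextB uB huB
    exact ⟨⟨vA, IsNetPiece.of_le hpA huAle hgapA hu.2⟩,
      ⟨vB, IsNetPiece.of_le hpB huBle hgapB hu.2⟩⟩
  refine ⟨hT, Prod.ext h0A h0B, hcA.prodMk hcB, DA ∪ DB, hDAc.union hDBc, Or.inl hDA0,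
    union_subset hDAsub hDBsub, ?_, fun u hu => ?_, fun t ht => ?_⟩
  · rw [closure_union, union_inter_distrib_right]
    exact union_subset_union hDAcl hDBcl
  · obtain ⟨⟨vA, hpA⟩, ⟨vB, hpB⟩⟩ := hpiece u (union_subset hDAsub hDBsub hu)
    exact ⟨min vA vB, hpA.prod hpB⟩
  · obtain ⟨uA, huA, huAle, hgapA⟩ := hcovA t ht
    obtain ⟨uB, huB, huBle, hgapB⟩ := hcovB t ht
    refine ⟨max uA uB, ?_, max_le huAle huBle, Ioc_max_inter_union_eq_empty hgapA hgapB⟩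
    rcases le_total uA uB with h | h
    · rw [max_eq_right h]; exact Or.inr huB
    · rw [max_eq_left h]; exact Or.inl huA

theorem product_of_asynchronous_networks_general
    {m n : ℕ} {A B : Type*}
    (fA : A → (Fin m → ℝ) → (Fin m → ℝ)) (ℰA : (Fin m → ℝ) → A)
    (fB : B → (Fin n → ℝ) → (Fin n → ℝ)) (ℰB : (Fin n → ℝ) → B)
    (FA : (Fin m → ℝ) → (Fin m → ℝ)) (hFA : FA = fun X => fA (ℰA X) X)
    (FB : (Fin n → ℝ) → (Fin n → ℝ)) (hFB : FB = fun X => fB (ℰB X) X)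
    (F : (Fin m → ℝ) × (Fin n → ℝ) → (Fin m → ℝ) × (Fin n → ℝ))
    (hF : F = fun X => (fA (ℰA X.1) X.1, fB (ℰB X.2) X.2)) :
    (∀ (XA : Fin m → ℝ) (XB : Fin n → ℝ) (φA : ℝ → Fin m → ℝ) (φB : ℝ → Fin n → ℝ),
      IsNetIntegralCurve FA XA (⊤ : EReal) φA → IsNetIntegralCurve FB XB (⊤ : EReal) φB →
      IsNetIntegralCurve F (XA, XB) (⊤ : EReal) (fun t => (φA t, φB t))) ∧
    ((∀ XA : Fin m → ℝ, ∃ φA : ℝ → Fin m → ℝ, IsNetIntegralCurve FA XA (⊤ : EReal) φA) →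
     (∀ XB : Fin n → ℝ, ∃ φB : ℝ → Fin n → ℝ, IsNetIntegralCurve FB XB (⊤ : EReal) φB) →
     ∀ X : (Fin m → ℝ) × (Fin n → ℝ), ∃ φ : ℝ → (Fin m → ℝ) × (Fin n → ℝ),
       IsNetIntegralCurve F X (⊤ : EReal) φ) := by
  have hprod : F = Prod.map FA FB := by subst hFA hFB hF; rfl
  subst hprod
  refine ⟨fun XA XB φA φB hA hB => hA.prod hB, fun hpropA hpropB X => ?_⟩
  obtain ⟨φA, hA⟩ := hpropA X.1
  obtain ⟨φB, hB⟩ := hpropB X.2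
  exact ⟨_, hA.prod hB⟩

/-- Products of asynchronous networks: if `φ_A`, `φ_B` are complete
integral curves of the network vector fields `F_A`, `F_B` of two asynchronous networks,
then `(φ_A, φ_B)` is a complete integral curve of the network vector field of the product
network (with index set `𝒜_A × 𝒜_B`, vector fields `f^{(α,β)} = f_A^α × f_B^β` and event
map `ℰ = (ℰ_A, ℰ_B)`). In particular, if both factors are proper then so is the product. -/
theorem product_of_asynchronous_networks
    {m n : ℕ} {A B : Type*} [Fintype A] [Nonempty A] [Fintype B] [Nonempty B]
    (fA : A → (Fin m → ℝ) → (Fin m → ℝ)) (ℰA : (Fin m → ℝ) → A)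
    (fB : B → (Fin n → ℝ) → (Fin n → ℝ)) (ℰB : (Fin n → ℝ) → B)
    (FA : (Fin m → ℝ) → (Fin m → ℝ)) (hFA : FA = fun X => fA (ℰA X) X)
    (FB : (Fin n → ℝ) → (Fin n → ℝ)) (hFB : FB = fun X => fB (ℰB X) X)
    (F : (Fin m → ℝ) × (Fin n → ℝ) → (Fin m → ℝ) × (Fin n → ℝ))
    (hF : F = fun X => (fA (ℰA X.1) X.1, fB (ℰB X.2) X.2)) :
    (∀ (XA : Fin m → ℝ) (XB : Fin n → ℝ) (φA : ℝ → Fin m → ℝ) (φB : ℝ → Fin n → ℝ),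
      IsNetIntegralCurve FA XA (⊤ : EReal) φA → IsNetIntegralCurve FB XB (⊤ : EReal) φB →
      IsNetIntegralCurve F (XA, XB) (⊤ : EReal) (fun t => (φA t, φB t))) ∧
    ((∀ XA : Fin m → ℝ, ∃ φA : ℝ → Fin m → ℝ, IsNetIntegralCurve FA XA (⊤ : EReal) φA) →
     (∀ XB : Fin n → ℝ, ∃ φB : ℝ → Fin n → ℝ, IsNetIntegralCurve FB XB (⊤ : EReal) φB) →
     ∀ X : (Fin m → ℝ) × (Fin n → ℝ), ∃ φ : ℝ → (Fin m → ℝ) × (Fin n → ℝ),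
       IsNetIntegralCurve F X (⊤ : EReal) φ) :=
  product_of_asynchronous_networks_general fA ℰA fB ℰB FA hFA FB hFB F hF
end

section
/- Let f = (f₁, f₂) : ℝ² → ℝ² be a C¹ vector field that is tangent to the cusp E¹ = {(x,y) ∈ ℝ² : y² = x³, x ≠ 0}, in the sense that for every t ∈ ℝ \ {0} the vector f(t², t³) is parallel to the tangent vector (2t, 3t²) of the cusp at (t², t³), i.e., 3t·f₁(t², t³) = 2·f₂(t², t³). Then f vanishes at the origin: f(0,0) = (0,0). -/
/-!
Along the cusp `γ t = (t², t³)` put `u t = f₁ (γ t)` and `v t = f₂ (γ t)`, so that tangency reads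
`v t = t · (3/2) u t` for `t ≠ 0`. Continuity forces `v 0 = 0`, and then `v` has derivative
`(3/2) u 0` at `0`. On the other hand `γ' 0 = 0`, so the chain rule gives `v' 0 = 0`, whence `u 0 = 0`.
-/

open Filter Topology

section DivisibleBySub

variable {𝕜 : Type*} [NontriviallyNormedField 𝕜] {u v : 𝕜 → 𝕜} {a : 𝕜}

theorem eq_zero_of_eq_sub_mul (hu : ContinuousAt u a) (hv : ContinuousAt v a)
    (h : ∀ t ≠ a, v t = (t - a) * u t) : v a = 0 := by
  have hlim : Tendsto (fun t => (t - a) * u t) (𝓝[≠] a) (𝓝 ((a - a) * u a)) :=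
    ((continuousAt_id.sub continuousAt_const).mul hu).tendsto.mono_left nhdsWithin_le_nhds
  rw [sub_self, zero_mul] at hlim
  refine tendsto_nhds_unique (hv.tendsto.mono_left nhdsWithin_le_nhds) (hlim.congr' ?_)
  filter_upwards [self_mem_nhdsWithin] with t ht using (h t ht).symm

theorem hasDerivAt_of_eq_sub_mul (hu : ContinuousAt u a) (hv : ContinuousAt v a)
    (h : ∀ t ≠ a, v t = (t - a) * u t) : HasDerivAt v (u a) a := by
  rw [hasDerivAt_iff_tendsto_slope]
  refine (hu.tendsto.mono_left nhdsWithin_le_nhds).congr' ?_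
  filter_upwards [self_mem_nhdsWithin] with t ht
  have ht' : t - a ≠ 0 := sub_ne_zero.mpr ht
  rw [slope_def_field, eq_zero_of_eq_sub_mul hu hv h, sub_zero, h t ht, mul_div_cancel_left₀ _ ht']

end DivisibleBySub

theorem hasDerivAt_cusp_zero : HasDerivAt (fun t : ℝ => ((t ^ 2, t ^ 3) : ℝ × ℝ)) 0 0 := by
  have h := (hasDerivAt_pow 2 (0 : ℝ)).prodMk (hasDerivAt_pow 3 (0 : ℝ))
  norm_num at h
  exact h

theorem DifferentiableAt.hasDerivAt_comp_cusp_zero {E : Type*} [NormedAddCommGroup E]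
    [NormedSpace ℝ E] {f : ℝ × ℝ → E} (hf : DifferentiableAt ℝ f 0) :
    HasDerivAt (fun t : ℝ => f (t ^ 2, t ^ 3)) 0 0 := by
  have h := hf.hasFDerivAt.comp_hasDerivAt_of_eq 0 hasDerivAt_cusp_zero (by simp [Prod.zero_eq_mk])
  rwa [map_zero] at h

/-- A `C¹` vector field `f = (f₁, f₂)` on `ℝ²` that is tangent to the
cusp `{(x,y) : y² = x³, x ≠ 0}` — i.e., at each point `(t², t³)` (`t ≠ 0`) the vector
`f(t², t³)` is parallel to the tangent direction `(2t, 3t²)`, equivalently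
`3t·f₁(t², t³) = 2·f₂(t², t³)` — must vanish at the origin. -/
theorem tangent_to_cusp_vanishes_at_origin
    (f : ℝ × ℝ → ℝ × ℝ) (hf : ContDiff ℝ 1 f)
    (htan : ∀ t : ℝ, t ≠ 0 →
      3 * t * (f (t ^ 2, t ^ 3)).1 = 2 * (f (t ^ 2, t ^ 3)).2) :
    f (0, 0) = (0, 0) := by
  have hd : DifferentiableAt ℝ f 0 := hf.differentiable one_ne_zero 0
  have hu : ContinuousAt (fun t : ℝ => 3 / 2 * (f (t ^ 2, t ^ 3)).1) 0 :=
    continuousAt_const.mul hd.fst.hasDerivAt_comp_cusp_zero.continuousAt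
  have hv : HasDerivAt (fun t : ℝ => (f (t ^ 2, t ^ 3)).2) 0 0 := hd.snd.hasDerivAt_comp_cusp_zero
  have hdiv : ∀ t ≠ (0 : ℝ), (f (t ^ 2, t ^ 3)).2 = (t - 0) * (3 / 2 * (f (t ^ 2, t ^ 3)).1) :=
    fun t ht => by linear_combination -(htan t ht) / 2
  have h₁ : 3 / 2 * (f ((0 : ℝ) ^ 2, (0 : ℝ) ^ 3)).1 = 0 :=
    (hasDerivAt_of_eq_sub_mul hu hv.continuousAt hdiv).unique hv
  have h₂ : (f ((0 : ℝ) ^ 2, (0 : ℝ) ^ 3)).2 = 0 := eq_zero_of_eq_sub_mul hu hv.continuousAt hdiv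
  norm_num at h₁ h₂
  exact Prod.ext h₁ h₂
end

section
/- Define F : ℝ² → ℝ² by F(x₁,x₂) = (1,−2) if x₁ < 0, F(x₁,x₂) = (−1,0) if x₁ > 0, and F(x₁,x₂) = (0,−2) if x₁ = 0 (the Filippov sliding vector field on the line x₁ = 0). Then through every point of ℝ² there is a unique complete integral curve of F, and the resulting semiflow Φ : ℝ² × ℝ₊ → ℝ², Φ(X,t) = φ_X(t) where φ_X is the integral curve through X, is continuous in (X,t). -/
/-!
Off the switching line `x₁ = 0` the field is constant, and on the line it is the sliding field
`(0, -2)`, tangent to the line. So the solution from `(a, b)` runs straight to the line in time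
`|a|` and then slides down it; this explicit flow is jointly continuous in `(X, t)`.

For uniqueness: `F₁₂` takes finitely many values, so on each smooth piece of an integral curve
`F₁₂ ∘ φ` is continuous with finite range on an interval, hence constant, and the curve is
affine there. Hence every integral curve leaves each point `φ t` along the straight line with
velocity `F₁₂ (φ t)`, and two continuous curves with this property and the same initial point
agree: the set where they agree is closed and open to the right in every `[0, T]`.
-/

open Set Filter Topology

/-- The Filippov vector field of examples 4.8(1): `(1,-2)` for `x₁ < 0`, `(-1,0)` for
`x₁ > 0`, and the sliding vector field `(0,-2)` on the line `x₁ = 0`. -/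
noncomputable def F₁₂ : ℝ × ℝ → ℝ × ℝ := fun X =>
  if X.1 < 0 then (1, -2) else if 0 < X.1 then (-1, 0) else (0, -2)

lemma eDom_top : eDom (⊤ : EReal) = Ici 0 := by
  ext t
  simp [eDom]

lemma isOpen_setOf_coe_lt (v : EReal) : IsOpen {t : ℝ | (t : EReal) < v} :=
  isOpen_lt continuous_coe_real_ereal continuous_const

section Affine

variable {E : Type*} [NormedAddCommGroup E] [NormedSpace ℝ E]

lemma hasDerivAt_affine (x₀ c : E) (a t : ℝ) :
    HasDerivAt (fun s : ℝ => x₀ + (s - a) • c) c t := by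
  simpa using (((hasDerivAt_id t).sub_const a).smul_const c).const_add x₀

lemma eq_affine_of_hasDerivAt {f : ℝ → E} {c : E} {a b : ℝ} (hf : ContinuousOn f (Icc a b))
    (hderiv : ∀ x ∈ Ioo a b, HasDerivAt f c x) : ∀ x ∈ Icc a b, f x = f a + (x - a) • c := by
  rcases le_or_gt b a with hba | hab
  · intro x hx
    obtain rfl : x = a := le_antisymm (hx.2.trans hba) hx.1
    simp
  -- The one-sided derivative at `a` is recovered from the limit of the derivative.
  have hright : ∀ x ∈ Ico a b, HasDerivWithinAt f c (Ici x) x := by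
    rintro x ⟨hax, hxb⟩
    rcases hax.eq_or_lt with rfl | hax
    · refine hasDerivWithinAt_Ici_of_tendsto_deriv
        (fun y hy => (hderiv y hy).differentiableAt.differentiableWithinAt)
        ((hf a (left_mem_Icc.2 hab.le)).mono Ioo_subset_Icc_self) (Ioo_mem_nhdsGT hab) ?_
      refine tendsto_const_nhds.congr' ?_
      filter_upwards [Ioo_mem_nhdsGT hab] with y hy
      exact (hderiv y hy).deriv.symm
    · exact (hderiv x ⟨hax, hxb⟩).hasDerivWithinAt
  exact eq_of_has_deriv_right_eq hright (fun x _ => (hasDerivAt_affine _ c a x).hasDerivWithinAt)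
    hf (by fun_prop) (by simp)

lemma eqOn_of_eventually_affine {f g : ℝ → E} {G : E → E} {a : ℝ}
    (hf : ContinuousOn f (Ici a)) (hg : ContinuousOn g (Ici a)) (hfg : f a = g a)
    (hf' : ∀ t ≥ a, ∀ᶠ s in 𝓝[≥] t, f s = f t + (s - t) • G (f t))
    (hg' : ∀ t ≥ a, ∀ᶠ s in 𝓝[≥] t, g s = g t + (s - t) • G (g t)) :
    EqOn f g (Ici a) := by
  intro T hT
  refine IsClosed.Icc_subset_of_forall_mem_nhdsWithin (a := a) (b := T)
    (s := {s | f s = g s}) ?_ hfg ?_ ⟨hT, le_rfl⟩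
  · have hIcc : Icc a T ⊆ Ici a := Icc_subset_Ici_self
    have hclosed := ((hf.mono hIcc).sub (hg.mono hIcc)).preimage_isClosed_of_isClosed isClosed_Icc
      (isClosed_singleton (x := (0 : E)))
    convert hclosed using 1
    ext s
    simp [sub_eq_zero, and_comm]
  · rintro t ⟨hft, hat, -⟩
    have hsub : 𝓝[>] t ≤ 𝓝[≥] t := nhdsWithin_mono t Ioi_subset_Ici_self
    filter_upwards [hsub (hf' t hat), hsub (hg' t hat)] with s hfs hgs
    rw [hfs, hgs, show f t = g t from hft]

end Affine

section IntegralCurve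

variable {E : Type*} [NormedAddCommGroup E] [NormedSpace ℝ E] {F : E → E} {φ : ℝ → E}

lemma netIntegralCurve_piece_of_affine {u : ℝ} {v : EReal} (huv : (u : EReal) < v)
    (h : ∀ t : ℝ, u ≤ t → (t : EReal) < v → φ t = φ u + (t - u) • F (φ u) ∧ F (φ t) = F (φ u)) :
    (∀ t : ℝ, (u : EReal) < (t : EReal) → (t : EReal) < v → HasDerivAt φ (F (φ t)) t) ∧
      ContinuousOn (fun t => F (φ t)) {t : ℝ | (u : EReal) < (t : EReal) ∧ (t : EReal) < v} ∧
      Tendsto (fun t => F (φ t)) (𝓝[>] u) (𝓝 (F (φ u))) := by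
  refine ⟨fun t hut htv => ?_, ?_, ?_⟩
  · rw [EReal.coe_lt_coe_iff] at hut
    rw [(h t hut.le htv).2]
    refine (hasDerivAt_affine (φ u) (F (φ u)) u t).congr_of_eventuallyEq ?_
    filter_upwards [Ioi_mem_nhds hut, (isOpen_setOf_coe_lt v).mem_nhds htv] with s hus hsv
    exact (h s (le_of_lt hus) hsv).1
  · exact continuousOn_const.congr fun t ht => (h t (EReal.coe_lt_coe_iff.1 ht.1).le ht.2).2
  · refine tendsto_const_nhds.congr' ?_
    filter_upwards [self_mem_nhdsWithin, nhdsWithin_le_nhds ((isOpen_setOf_coe_lt v).mem_nhds huv)]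
      with t hut htv
    exact (h t (le_of_lt hut) htv).2.symm

theorem isNetIntegralCurve_top_of_affine_pieces {τ : ℝ} {c₁ c₂ : E} (hτ : 0 ≤ τ)
    (hcont : ContinuousOn φ (Ici 0))
    (h₁ : ∀ t ∈ Ico 0 τ, φ t = φ 0 + t • c₁ ∧ F (φ t) = c₁)
    (h₂ : ∀ t ∈ Ici τ, φ t = φ τ + (t - τ) • c₂ ∧ F (φ t) = c₂) :
    IsNetIntegralCurve F (φ 0) ⊤ φ := by
  rw [IsNetIntegralCurve, eDom_top]
  refine ⟨EReal.zero_lt_top, rfl, hcont, {0, τ}, (toFinite _).countable, mem_insert _ _, ?_,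
    ?_, fun u hu => ?_, fun t ht => ?_⟩
  · rintro x (rfl | rfl)
    exacts [le_refl (0 : ℝ), hτ]
  · rw [(toFinite _).isClosed.closure_eq]
    exact inter_subset_left
  · by_cases huτ : u = τ
    · subst huτ
      have hc₂ := (h₂ u self_mem_Ici).2
      refine ⟨⊤, Or.inr rfl, EReal.coe_lt_top _, ?_,
        netIntegralCurve_piece_of_affine (EReal.coe_lt_top _) fun t ht _ => hc₂ ▸ h₂ t ht⟩
      rintro w (rfl | rfl) hw <;> rw [EReal.coe_lt_coe_iff] at hw <;> linarith
    · obtain rfl : u = 0 := by simpa [huτ] using hu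
      have hτ₀ : 0 < τ := lt_of_le_of_ne hτ huτ
      have hc₁ := (h₁ 0 ⟨le_rfl, hτ₀⟩).2
      refine ⟨τ, Or.inl ⟨τ, by simp, rfl⟩, EReal.coe_lt_coe_iff.2 hτ₀, ?_,
        netIntegralCurve_piece_of_affine (EReal.coe_lt_coe_iff.2 hτ₀) fun t ht htτ => ?_⟩
      · rintro w (rfl | rfl) hw
        exacts [(lt_irrefl _ hw).elim, le_rfl]
      · simpa [hc₁] using h₁ t ⟨ht, EReal.coe_lt_coe_iff.1 htτ⟩
  · rcases lt_or_ge t τ with htτ | hτt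
    · refine ⟨0, mem_insert _ _, ht, eq_empty_iff_forall_notMem.2 ?_⟩
      rintro x ⟨⟨hx₀, hxt⟩, rfl | rfl⟩ <;> linarith
    · refine ⟨τ, mem_insert_of_mem _ rfl, hτt, eq_empty_iff_forall_notMem.2 ?_⟩
      rintro x ⟨⟨hτx, -⟩, rfl | rfl⟩ <;> linarith

theorem IsNetIntegralCurve.eventually_affine (hF : (range F).Finite) {X : E} {T : EReal}
    (hφ : IsNetIntegralCurve F X T φ) {t : ℝ} (ht : t ∈ eDom T) :
    ∀ᶠ s in 𝓝[≥] t, φ s = φ t + (s - t) • F (φ t) := by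
  obtain ⟨-, -, hcont, D, -, -, hDT, -, hpiece, hcover⟩ := hφ
  obtain ⟨u, huD, hut, hgap⟩ := hcover t ht
  obtain ⟨v, hvD, huv, -, hderiv, hFcont, hFlim⟩ := hpiece u huD
  set S := {s : ℝ | (u : EReal) < (s : EReal) ∧ (s : EReal) < v}
  have hvT : v ≤ T := by
    rcases hvD with ⟨w, hw, rfl⟩ | rfl
    exacts [(hDT hw).2.le, le_rfl]
  have htv : (t : EReal) < v := by
    rcases hvD with ⟨w, hw, rfl⟩ | rfl
    · by_contra! hwt
      have hw' : w ∈ Ioc u t ∩ D := ⟨⟨EReal.coe_lt_coe_iff.1 huv, EReal.coe_le_coe_iff.1 hwt⟩, hw⟩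
      rwa [hgap] at hw'
    · exact ht.2
  -- A continuous map with finite range is constant on the interval `S`.
  have hSconst : ∀ s ∈ S, ∀ s' ∈ S, F (φ s) = F (φ s') := fun s hs s' hs' =>
    ((ordConnected_Ioo.preimage_mono EReal.coe_strictMono.monotone).isPreconnected
      ).constant_of_mapsTo hF.isDiscrete hFcont (fun _ _ => mem_range_self _) hs hs'
  have hconst : ∀ s ∈ S, F (φ s) = F (φ t) := by
    rcases hut.eq_or_lt with rfl | hut
    · intro s hs
      refine tendsto_nhds_unique (tendsto_const_nhds.congr' ?_) hFlim
      have hv : ∀ᶠ r : ℝ in 𝓝[>] u, (r : EReal) < v :=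
        nhdsWithin_le_nhds ((isOpen_setOf_coe_lt v).mem_nhds htv)
      filter_upwards [self_mem_nhdsWithin, hv] with r hr hrv
      exact hSconst s hs r ⟨EReal.coe_lt_coe_iff.2 hr, hrv⟩
    · exact fun s hs => hSconst s hs t ⟨EReal.coe_lt_coe_iff.2 hut, htv⟩
  obtain ⟨w, htw, hwv⟩ := EReal.exists_between_coe_real htv
  filter_upwards [Icc_mem_nhdsGE (EReal.coe_lt_coe_iff.1 htw)] with s hs
  refine eq_affine_of_hasDerivAt (hcont.mono fun r hr => ?_) (fun r hr => ?_) s hs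
  · exact ⟨ht.1.trans hr.1, (EReal.coe_le_coe_iff.2 hr.2).trans_lt (hwv.trans_le hvT)⟩
  · have hrS : r ∈ S := ⟨EReal.coe_lt_coe_iff.2 (hut.trans_lt hr.1),
      (EReal.coe_lt_coe_iff.2 hr.2).trans hwv⟩
    rw [← hconst r hrS]
    exact hderiv r hrS.1 hrS.2

theorem IsNetIntegralCurve.eqOn_of_finite_range (hF : (range F).Finite) {X : E} {ψ : ℝ → E}
    (hφ : IsNetIntegralCurve F X ⊤ φ) (hψ : IsNetIntegralCurve F X ⊤ ψ) : EqOn φ ψ (Ici 0) := by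
  have hcont := hφ.2.2.1
  have hcont' := hψ.2.2.1
  rw [eDom_top] at hcont hcont'
  refine eqOn_of_eventually_affine hcont hcont' (hφ.2.1.trans hψ.2.1.symm)
    (fun t ht => hφ.eventually_affine hF ?_) (fun t ht => hψ.eventually_affine hF ?_) <;>
  rwa [eDom_top]

end IntegralCurve

lemma F₁₂_of_neg {X : ℝ × ℝ} (h : X.1 < 0) : F₁₂ X = (1, -2) := by
  simp [F₁₂, h]

lemma F₁₂_of_pos {X : ℝ × ℝ} (h : 0 < X.1) : F₁₂ X = (-1, 0) := by
  simp [F₁₂, h, h.not_gt]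

lemma F₁₂_of_eq_zero {X : ℝ × ℝ} (h : X.1 = 0) : F₁₂ X = (0, -2) := by
  simp [F₁₂, h]

lemma finite_range_F₁₂ : (range F₁₂).Finite :=
  (toFinite {((1 : ℝ), (-2 : ℝ)), (-1, 0), (0, -2)}).subset <| by
    rintro _ ⟨X, rfl⟩
    unfold F₁₂
    split_ifs <;> simp

/-- The first coordinate moves towards the switching line `x₁ = 0` at unit speed and then stays
on it; the second one decreases at rate `2` except while `x₁ > 0`. -/
noncomputable def slidingFlow (X : ℝ × ℝ) (t : ℝ) : ℝ × ℝ :=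
  (min (X.1 + t) 0 + max (X.1 - t) 0, X.2 - 2 * max (t - max X.1 0) 0)

lemma continuous_slidingFlow : Continuous fun p : (ℝ × ℝ) × ℝ => slidingFlow p.1 p.2 := by
  unfold slidingFlow
  fun_prop

lemma slidingFlow_zero (X : ℝ × ℝ) : slidingFlow X 0 = X := by
  simp [slidingFlow, min_add_max]

lemma slidingFlow_of_nonpos_of_le {a b t : ℝ} (ha : a ≤ 0) (ht : 0 ≤ t) (hta : t ≤ -a) :
    slidingFlow (a, b) t = (a + t, b - 2 * t) := by
  rw [slidingFlow, min_eq_left (by linarith), max_eq_right (by linarith), max_eq_right ha,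
    max_eq_left (by linarith)]
  simp

lemma slidingFlow_of_nonpos_of_ge {a b t : ℝ} (ha : a ≤ 0) (hta : -a ≤ t) :
    slidingFlow (a, b) t = (0, b - 2 * t) := by
  rw [slidingFlow, min_eq_right (by linarith), max_eq_right (by linarith), max_eq_right ha,
    max_eq_left (by linarith)]
  simp

lemma slidingFlow_of_nonneg_of_le {a b t : ℝ} (ha : 0 ≤ a) (ht : 0 ≤ t) (hta : t ≤ a) :
    slidingFlow (a, b) t = (a - t, b) := by
  rw [slidingFlow, min_eq_right (by linarith), max_eq_left (by linarith), max_eq_left ha,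
    max_eq_right (by linarith)]
  simp

lemma slidingFlow_of_nonneg_of_ge {a b t : ℝ} (ha : 0 ≤ a) (hta : a ≤ t) :
    slidingFlow (a, b) t = (0, b - 2 * (t - a)) := by
  rw [slidingFlow, min_eq_right (by linarith), max_eq_right (by linarith), max_eq_left ha,
    max_eq_left (by linarith)]
  simp

theorem isNetIntegralCurve_slidingFlow (X : ℝ × ℝ) :
    IsNetIntegralCurve F₁₂ X ⊤ (slidingFlow X) := by
  obtain ⟨a, b⟩ := X
  have hcont : ContinuousOn (slidingFlow (a, b)) (Ici 0) :=
    (continuous_slidingFlow.comp (Continuous.prodMk_right _)).continuousOn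
  rcases le_total a 0 with ha | ha
  · convert isNetIntegralCurve_top_of_affine_pieces (F := F₁₂) (c₁ := (1, -2)) (c₂ := (0, -2))
      (neg_nonneg.2 ha) hcont (fun t ht => ?_) (fun t ht => ?_) using 1
    · rw [slidingFlow_zero]
    · rw [slidingFlow_zero, slidingFlow_of_nonpos_of_le ha ht.1 ht.2.le]
      refine ⟨?_, F₁₂_of_neg (by simp; linarith [ht.2])⟩
      ext <;> simp [sub_eq_add_neg, mul_comm]
    · rw [slidingFlow_of_nonpos_of_ge ha ht, slidingFlow_of_nonpos_of_ge ha le_rfl]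
      refine ⟨?_, F₁₂_of_eq_zero rfl⟩
      ext <;> simp
      ring
  · convert isNetIntegralCurve_top_of_affine_pieces (F := F₁₂) (c₁ := (-1, 0)) (c₂ := (0, -2))
      ha hcont (fun t ht => ?_) (fun t ht => ?_) using 1
    · rw [slidingFlow_zero]
    · rw [slidingFlow_zero, slidingFlow_of_nonneg_of_le ha ht.1 ht.2.le]
      refine ⟨?_, F₁₂_of_pos (by simp; linarith [ht.2])⟩
      ext <;> simp [sub_eq_add_neg]
    · rw [slidingFlow_of_nonneg_of_ge ha ht, slidingFlow_of_nonneg_of_ge ha le_rfl]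
      refine ⟨?_, F₁₂_of_eq_zero rfl⟩
      ext <;> simp
      ring

/-- For the Filippov field `F₁₂`, through every point of `ℝ²` there is
a unique complete integral curve, and the resulting semiflow `Φ(X,t)` is continuous in
`(X,t) ∈ ℝ² × ℝ₊`. -/
theorem filippov_sliding_semiflow :
    ∃ Φ : ℝ × ℝ → ℝ → ℝ × ℝ,
      (∀ X : ℝ × ℝ, IsNetIntegralCurve F₁₂ X (⊤ : EReal) (Φ X)) ∧
      (∀ (X : ℝ × ℝ) (ψ : ℝ → ℝ × ℝ), IsNetIntegralCurve F₁₂ X (⊤ : EReal) ψ →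
        ∀ t : ℝ, 0 ≤ t → ψ t = Φ X t) ∧
      ContinuousOn (fun p : (ℝ × ℝ) × ℝ => Φ p.1 p.2) ((univ : Set (ℝ × ℝ)) ×ˢ Ici (0 : ℝ)) :=
  ⟨slidingFlow, isNetIntegralCurve_slidingFlow,
    fun X _ hψ _ ht => hψ.eqOn_of_finite_range finite_range_F₁₂
      (isNetIntegralCurve_slidingFlow X) ht,
    continuous_slidingFlow.continuousOn⟩
end

section
/- Let k > 0 and let ψ : [0,∞) → ℝ be differentiable with ψ'(t) = −2k·sin(2π·ψ(t)) for all t ≥ 0 and ψ(0) ∈ (−1/2, 1/2). Then ψ(t) ∈ (−1/2, 1/2) for all t ≥ 0 and lim_{t→∞} ψ(t) = 0. (Two identical diffusively coupled phase oscillators phase synchronize unless their initial phase difference is exactly 1/2, i.e., antiphase.) -/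
open Filter Topology Set Real

/-!
The equation is the gradient flow `ψ' = -(k/π) V'(ψ)` of `V x = 1 - cos (2πx)`: along solutions
`V' = -4πk sin² (2πψ) = -4πk V (2 - V) ≤ 0`. Hence `V` never increases, so it stays below its
initial value `V₀ < 2`, and `ψ` cannot reach the antiphase states `±1/2` where `V = 2`. Then
`V' ≤ -4πk (2 - V₀) V`, so `V` decays exponentially by Grönwall, and `8ψ² ≤ V` on `[-1/2, 1/2]`
forces `ψ → 0`.
-/

noncomputable def phasePotential (x : ℝ) : ℝ := 1 - cos (2 * π * x)

lemma phasePotential_nonneg (x : ℝ) : 0 ≤ phasePotential x :=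
  sub_nonneg.2 (cos_le_one _)

lemma phasePotential_lt_two {x : ℝ} (hx : x ∈ Ioo (-(1 / 2) : ℝ) (1 / 2)) :
    phasePotential x < 2 := by
  have hlt : |2 * π * x| < π := by
    rw [abs_mul, abs_of_pos two_pi_pos]
    nlinarith [abs_lt.2 hx, pi_pos]
  have := cos_lt_cos_of_nonneg_of_le_pi (abs_nonneg _) le_rfl hlt
  rw [cos_abs, cos_pi] at this
  unfold phasePotential
  linarith

lemma phasePotential_half : phasePotential (1 / 2) = 2 := by
  rw [phasePotential, show 2 * π * (1 / 2) = π by ring, cos_pi]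
  norm_num

lemma phasePotential_neg_half : phasePotential (-(1 / 2)) = 2 := by
  rw [phasePotential, show 2 * π * -(1 / 2) = -π by ring, cos_neg, cos_pi]
  norm_num

lemma eight_mul_sq_le_phasePotential {x : ℝ} (hx : |x| ≤ 1 / 2) :
    8 * x ^ 2 ≤ phasePotential x := by
  have hle : |2 * π * x| ≤ π := by
    rw [abs_mul, abs_of_pos two_pi_pos]
    nlinarith [pi_pos]
  have := cos_le_one_sub_mul_cos_sq hle
  have hπ : π ≠ 0 := pi_ne_zero
  unfold phasePotential
  field_simp at this
  nlinarith

lemma sin_two_pi_mul_sq (x : ℝ) :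
    sin (2 * π * x) ^ 2 = phasePotential x * (2 - phasePotential x) := by
  rw [sin_sq, phasePotential]
  ring

lemma hasDerivAt_phasePotential (x : ℝ) :
    HasDerivAt phasePotential (2 * π * sin (2 * π * x)) x := by
  refine (((hasDerivAt_id x).const_mul (2 * π)).cos.const_sub 1).congr_deriv ?_
  simp only [id, mul_one]
  ring

section PhaseDifference

variable {k : ℝ} {ψ : ℝ → ℝ}

lemma hasDerivAt_phasePotential_comp
    (hψ : ∀ t : ℝ, 0 ≤ t → HasDerivAt ψ (-2 * k * sin (2 * π * ψ t)) t) {t : ℝ} (ht : 0 ≤ t) :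
    HasDerivAt (fun t ↦ phasePotential (ψ t)) (-(4 * π * k) * sin (2 * π * ψ t) ^ 2) t := by
  refine ((hasDerivAt_phasePotential (ψ t)).comp t (hψ t ht)).congr_deriv ?_
  ring

lemma continuousOn_phasePotential_comp
    (hψ : ∀ t : ℝ, 0 ≤ t → HasDerivAt ψ (-2 * k * sin (2 * π * ψ t)) t) :
    ContinuousOn (fun t ↦ phasePotential (ψ t)) (Ici 0) := fun _ ht ↦
  (hasDerivAt_phasePotential_comp hψ ht).continuousAt.continuousWithinAt

lemma antitoneOn_phasePotential_comp (hk : 0 ≤ k)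
    (hψ : ∀ t : ℝ, 0 ≤ t → HasDerivAt ψ (-2 * k * sin (2 * π * ψ t)) t) :
    AntitoneOn (fun t ↦ phasePotential (ψ t)) (Ici 0) := by
  refine antitoneOn_of_hasDerivWithinAt_nonpos
    (f' := fun t ↦ -(4 * π * k) * sin (2 * π * ψ t) ^ 2) (convex_Ici 0)
    (continuousOn_phasePotential_comp hψ) (fun t ht ↦ ?_) (fun t _ ↦ ?_)
  · rw [interior_Ici] at ht ⊢
    exact (hasDerivAt_phasePotential_comp hψ (le_of_lt ht)).hasDerivWithinAt
  · have : 0 ≤ 4 * π * k := by positivity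
    nlinarith [sq_nonneg (sin (2 * π * ψ t))]

theorem phase_mem_Ioo_of_initial_mem_Ioo (hk : 0 ≤ k)
    (hψ : ∀ t : ℝ, 0 ≤ t → HasDerivAt ψ (-2 * k * sin (2 * π * ψ t)) t)
    (h0 : ψ 0 ∈ Ioo (-(1 / 2) : ℝ) (1 / 2)) {t : ℝ} (ht : 0 ≤ t) :
    ψ t ∈ Ioo (-(1 / 2) : ℝ) (1 / 2) := by
  have hV : ∀ s ∈ Icc 0 t, phasePotential (ψ s) < 2 := fun s hs ↦
    (antitoneOn_phasePotential_comp hk hψ self_mem_Ici hs.1 hs.1).trans_lt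
      (phasePotential_lt_two h0)
  have hcont : ContinuousOn ψ (Icc 0 t) := fun s hs ↦
    (hψ s hs.1).continuousAt.continuousWithinAt
  by_contra hout
  rw [mem_Ioo, not_and_or, not_lt, not_lt] at hout
  rcases hout with hlow | hhigh
  · obtain ⟨s, hs, hψs⟩ := intermediate_value_Icc' ht hcont ⟨hlow, h0.1.le⟩
    exact (hV s hs).ne (hψs ▸ phasePotential_neg_half)
  · obtain ⟨s, hs, hψs⟩ := intermediate_value_Icc ht hcont ⟨h0.2.le, hhigh⟩
    exact (hV s hs).ne (hψs ▸ phasePotential_half)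

theorem phasePotential_comp_le_mul_exp (hk : 0 ≤ k)
    (hψ : ∀ t : ℝ, 0 ≤ t → HasDerivAt ψ (-2 * k * sin (2 * π * ψ t)) t) {t : ℝ} (ht : 0 ≤ t) :
    phasePotential (ψ t) ≤
      phasePotential (ψ 0) * exp (-(4 * π * k * (2 - phasePotential (ψ 0))) * t) := by
  set V₀ := phasePotential (ψ 0)
  have hdecay : ∀ s ∈ Ico 0 t, -(4 * π * k) * sin (2 * π * ψ s) ^ 2 ≤
      -(4 * π * k * (2 - V₀)) * phasePotential (ψ s) + 0 := fun s hs ↦ by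
    have hVs : phasePotential (ψ s) ≤ V₀ :=
      antitoneOn_phasePotential_comp hk hψ self_mem_Ici hs.1 hs.1
    have : 0 ≤ 4 * π * k := by positivity
    rw [sin_two_pi_mul_sq]
    nlinarith [mul_nonneg this (mul_nonneg (phasePotential_nonneg (ψ s)) (sub_nonneg.2 hVs))]
  have := le_gronwallBound_of_liminf_deriv_right_le
    ((continuousOn_phasePotential_comp hψ).mono Icc_subset_Ici_self)
    (fun s hs _ hr ↦
      (hasDerivAt_phasePotential_comp hψ hs.1).hasDerivWithinAt.liminf_right_slope_le hr)
    le_rfl hdecay t ⟨ht, le_rfl⟩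
  rwa [sub_zero, gronwallBound_ε0] at this

end PhaseDifference

/-- Two identical diffusively coupled phase oscillators phase
synchronize unless they start exactly in antiphase: if `k > 0` and the phase difference
`ψ` satisfies `ψ' = −2k·sin(2πψ)` on `[0,∞)` with `ψ(0) ∈ (−1/2, 1/2)`, then
`ψ(t) ∈ (−1/2, 1/2)` for all `t ≥ 0` and `ψ(t) → 0` as `t → ∞`. -/
theorem identical_oscillators_phase_synchronize
    (k : ℝ) (hk : 0 < k) (ψ : ℝ → ℝ)
    (hψ : ∀ t : ℝ, 0 ≤ t →
      HasDerivAt ψ (-2 * k * Real.sin (2 * Real.pi * ψ t)) t)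
    (h0 : ψ 0 ∈ Set.Ioo (-(1 / 2) : ℝ) (1 / 2)) :
    (∀ t : ℝ, 0 ≤ t → ψ t ∈ Set.Ioo (-(1 / 2) : ℝ) (1 / 2)) ∧
    Tendsto ψ atTop (𝓝 0) := by
  have hinv := fun t (ht : 0 ≤ t) ↦ phase_mem_Ioo_of_initial_mem_Ioo hk.le hψ h0 ht
  refine ⟨hinv, ?_⟩
  set V₀ := phasePotential (ψ 0)
  set C := 4 * π * k * (2 - V₀)
  have hC : 0 < C := mul_pos (by positivity) (sub_pos.2 (phasePotential_lt_two h0))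
  have hbound : ∀ t, 0 ≤ t → ‖ψ t‖ ≤ √(V₀ * exp (-C * t) / 8) := fun t ht ↦ by
    refine abs_le_sqrt ?_
    have h8 := eight_mul_sq_le_phasePotential (abs_le.2 ⟨(hinv t ht).1.le, (hinv t ht).2.le⟩)
    linarith [phasePotential_comp_le_mul_exp hk.le hψ ht]
  have hexp : Tendsto (fun t ↦ exp (-C * t)) atTop (𝓝 0) :=
    tendsto_exp_atBot.comp (tendsto_id.const_mul_atTop_of_neg (neg_lt_zero.2 hC))
  refine squeeze_zero_norm' ((eventually_ge_atTop 0).mono hbound) ?_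
  simpa using ((hexp.const_mul V₀).div_const 8).sqrt
end

section
/- Let k > 0 and Δ ∈ ℝ with |Δ| < 2k, and set ψ* = (1/(2π))·arcsin(Δ/(2k)) ∈ (−1/4, 1/4). Let ψ : [0,∞) → ℝ be differentiable with ψ'(t) = Δ − 2k·sin(2π·ψ(t)) for all t ≥ 0 and ψ(0) ∈ (−1/2 − ψ*, 1/2 − ψ*). Then lim_{t→∞} ψ(t) = ψ*. In particular, if ε ∈ (0, 1/2) and arcsin(|Δ|/(2k)) < 2πε, then |ψ*| < ε and there exists T ≥ 0 such that |ψ(t)| < ε for all t ≥ T (the oscillators eventually phase synchronize to within ε). -/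
/-!
Write `v y = Δ - 2k sin (2πy) = 2k (sin (2πψ*) - sin (2πy))`. On `[-1/2 - ψ*, 1/2 - ψ*]` the field
vanishes exactly at `ψ*` and at the two endpoints, is positive below `ψ*` and negative above.
Since `v` is Lipschitz, solutions are unique, so a trajectory starting strictly between two
equilibria never reaches either of them; it is therefore monotone and bounded, hence convergent,
and its limit must be an equilibrium, which can only be `ψ*`.
-/

open Filter Set Real Topology

theorem AntitoneOn.exists_tendsto_atTop {x : ℝ → ℝ} {t₀ m : ℝ} (hx : AntitoneOn x (Ici t₀))
    (hm : ∀ t, t₀ ≤ t → m ≤ x t) : ∃ L ∈ Icc m (x t₀), Tendsto x atTop (𝓝 L) := by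
  set g := fun t ↦ x (max t t₀)
  have hg : Antitone g := fun s t hst ↦
    hx (le_max_right s t₀) (le_max_right t t₀) (max_le_max_right _ hst)
  have hgm : BddBelow (range g) := ⟨m, forall_mem_range.2 fun t ↦ hm _ (le_max_right _ _)⟩
  refine ⟨⨅ t, g t, ⟨le_ciInf fun t ↦ hm _ (le_max_right _ _), ?_⟩, ?_⟩
  · simpa [g] using ciInf_le hgm t₀
  · refine (tendsto_atTop_ciInf hg hgm).congr' ?_
    filter_upwards [eventually_ge_atTop t₀] with t ht
    simp [g, max_eq_left ht]

section AutonomousODE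

variable {f x : ℝ → ℝ} {K : NNReal}

theorem eq_of_apply_eq_equilibrium (hf : LipschitzWith K f)
    (hx : ∀ t, 0 ≤ t → HasDerivAt x (f (x t)) t) {c t₁ t : ℝ} (hc : f c = 0) (ht₁ : 0 ≤ t₁)
    (hxc : x t₁ = c) (ht : 0 ≤ t) : x t = c := by
  have hconst : ∀ s, HasDerivAt (fun _ : ℝ ↦ c) (f c) s := fun s ↦ by
    rw [hc]; exact hasDerivAt_const s c
  rcases le_total t₁ t with h | h
  · exact ODE_solution_unique_of_mem_Icc_right (v := fun _ ↦ f) (s := fun _ ↦ univ)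
      (fun _ _ ↦ hf.lipschitzOnWith) (HasDerivAt.continuousOn fun s hs ↦ hx s (ht₁.trans hs.1))
      (fun s hs ↦ (hx s (ht₁.trans hs.1)).hasDerivWithinAt) (fun _ _ ↦ mem_univ _)
      continuousOn_const (fun s _ ↦ (hconst s).hasDerivWithinAt) (fun _ _ ↦ mem_univ _) hxc
      ⟨h, le_rfl⟩
  · exact ODE_solution_unique_of_mem_Icc_left (v := fun _ ↦ f) (s := fun _ ↦ univ)
      (fun _ _ ↦ hf.lipschitzOnWith) (HasDerivAt.continuousOn fun s hs ↦ hx s (ht.trans hs.1))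
      (fun s hs ↦ (hx s (ht.trans hs.1.le)).hasDerivWithinAt) (fun _ _ ↦ mem_univ _)
      continuousOn_const (fun s _ ↦ (hconst s).hasDerivWithinAt) (fun _ _ ↦ mem_univ _) hxc
      ⟨le_rfl, h⟩

theorem mapsTo_Ioo_of_equilibria (hf : LipschitzWith K f)
    (hx : ∀ t, 0 ≤ t → HasDerivAt x (f (x t)) t) {a b : ℝ} (ha : f a = 0) (hb : f b = 0)
    (h0 : x 0 ∈ Ioo a b) : MapsTo x (Ici 0) (Ioo a b) := by
  have hcont : ContinuousOn x (Ici 0) := HasDerivAt.continuousOn fun t ht ↦ hx t ht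
  intro t ht
  by_contra hout
  rw [mem_Ioo, not_and_or, not_lt, not_lt] at hout
  rcases hout with h | h
  · obtain ⟨t₁, ht₁, hxa⟩ :=
      isPreconnected_Ici.intermediate_value ht self_mem_Ici hcont ⟨h, h0.1.le⟩
    exact h0.1.ne' (eq_of_apply_eq_equilibrium hf hx ha ht₁ hxa le_rfl)
  · obtain ⟨t₁, ht₁, hxb⟩ :=
      isPreconnected_Ici.intermediate_value self_mem_Ici ht hcont ⟨h0.2.le, h⟩
    exact h0.2.ne (eq_of_apply_eq_equilibrium hf hx hb ht₁ hxb le_rfl)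

/-- The increments `x (n + 1) - x n` tend to `0` and, by the mean value theorem, equal values of
`f ∘ x` at times tending to infinity. -/
theorem apply_eq_zero_of_tendsto {L : ℝ} (hf : ContinuousAt f L)
    (hx : ∀ t, 0 ≤ t → HasDerivAt x (f (x t)) t) (hL : Tendsto x atTop (𝓝 L)) : f L = 0 := by
  have hmvt : ∀ n : ℕ, ∃ ξ ∈ Ioo (n : ℝ) (n + 1), f (x ξ) = x (n + 1) - x n := by
    intro n
    have hn : (0 : ℝ) ≤ n := n.cast_nonneg
    obtain ⟨ξ, hξ, h⟩ := exists_hasDerivAt_eq_slope x (f ∘ x) (lt_add_one (n : ℝ))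
      (HasDerivAt.continuousOn fun s hs ↦ hx s (hn.trans hs.1))
      (fun s hs ↦ hx s (hn.trans hs.1.le))
    exact ⟨ξ, hξ, by simpa using h⟩
  choose ξ hξ hslope using hmvt
  have hξ_top : Tendsto ξ atTop atTop :=
    tendsto_atTop_mono (fun n ↦ (hξ n).1.le) tendsto_natCast_atTop_atTop
  have hfx : Tendsto (fun n ↦ f (x (ξ n))) atTop (𝓝 (f L)) := hf.tendsto.comp (hL.comp hξ_top)
  have hincr : Tendsto (fun n : ℕ ↦ x (n + 1) - x n) atTop (𝓝 (L - L)) :=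
    (hL.comp (tendsto_atTop_add_const_right _ 1 tendsto_natCast_atTop_atTop)).sub
      (hL.comp tendsto_natCast_atTop_atTop)
  rw [sub_self] at hincr
  simp only [hslope] at hfx
  exact tendsto_nhds_unique hfx hincr

theorem tendsto_of_neg_on_Ioo (hf : LipschitzWith K f)
    (hx : ∀ t, 0 ≤ t → HasDerivAt x (f (x t)) t) {a b : ℝ} (ha : f a = 0) (hb : f b = 0)
    (hneg : ∀ y ∈ Ioo a b, f y < 0) (h0 : x 0 ∈ Ioo a b) : Tendsto x atTop (𝓝 a) := by
  have hmaps := mapsTo_Ioo_of_equilibria hf hx ha hb h0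
  have hanti : AntitoneOn x (Ici 0) :=
    antitoneOn_of_hasDerivWithinAt_nonpos (convex_Ici 0)
      (HasDerivAt.continuousOn fun t ht ↦ hx t ht)
      (fun t ht ↦ (hx t (interior_subset ht)).hasDerivWithinAt)
      (fun t ht ↦ (hneg _ (hmaps (interior_subset ht))).le)
  obtain ⟨L, ⟨haL, hL0⟩, hL⟩ := hanti.exists_tendsto_atTop fun t ht ↦ (hmaps ht).1.le
  have hfL : f L = 0 := apply_eq_zero_of_tendsto hf.continuous.continuousAt hx hL
  obtain rfl : L = a := by
    by_contra hne
    exact (hneg L ⟨haL.lt_of_ne' hne, hL0.trans_lt h0.2⟩).ne hfL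
  exact hL

theorem tendsto_of_pos_on_Ioo_of_neg_on_Ioo (hf : LipschitzWith K f)
    (hx : ∀ t, 0 ≤ t → HasDerivAt x (f (x t)) t) {c a b : ℝ} (hc : f c = 0) (ha : f a = 0)
    (hb : f b = 0) (hpos : ∀ y ∈ Ioo c a, 0 < f y) (hneg : ∀ y ∈ Ioo a b, f y < 0)
    (h0 : x 0 ∈ Ioo c b) : Tendsto x atTop (𝓝 a) := by
  rcases lt_trichotomy (x 0) a with h | h | h
  · have hreflect := tendsto_of_neg_on_Ioo (f := fun y ↦ -f (-y)) (x := fun t ↦ -x t)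
      (mul_one K ▸ (hf.comp LipschitzWith.id.neg).neg)
      (fun t ht ↦ by simp only [neg_neg]; exact (hx t ht).neg)
      (by simpa using ha) (by simpa using hc)
      (fun y hy ↦ neg_neg_of_pos (hpos _ ⟨lt_neg.1 hy.2, neg_lt.1 hy.1⟩))
      ⟨neg_lt_neg h, neg_lt_neg h0.1⟩
    simpa using hreflect.neg
  · exact tendsto_const_nhds.congr' <| (eventually_ge_atTop 0).mono fun t ht ↦
      (eq_of_apply_eq_equilibrium hf hx ha le_rfl h ht).symm
  · exact tendsto_of_neg_on_Ioo hf hx ha hb hneg ⟨h, h0.2⟩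

end AutonomousODE

theorem Real.sin_lt_sin_of_lt_of_lt_pi_sub {θ₀ θ : ℝ} (hθ₀ : -(π / 2) < θ₀) (h₁ : θ₀ < θ)
    (h₂ : θ < π - θ₀) : sin θ₀ < sin θ := by
  rw [← sub_pos, sin_sub_sin]
  have hsin : 0 < sin ((θ - θ₀) / 2) := sin_pos_of_pos_of_lt_pi (by linarith) (by linarith)
  have hcos : 0 < cos ((θ + θ₀) / 2) := cos_pos_of_mem_Ioo ⟨by linarith, by linarith⟩
  positivity

theorem Real.abs_arcsin_le_arcsin_abs (z : ℝ) : |arcsin z| ≤ arcsin |z| := by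
  refine abs_le.2 ⟨?_, arcsin_le_arcsin (le_abs_self z)⟩
  rw [neg_le, ← arcsin_neg]
  exact arcsin_le_arcsin (neg_le_abs z)

theorem Real.arcsin_div_two_pi_mem_Ioo {z : ℝ} (hz : |z| < 1) :
    arcsin z / (2 * π) ∈ Ioo (-(1 / 4) : ℝ) (1 / 4) := by
  obtain ⟨hz₁, hz₂⟩ := abs_lt.1 hz
  have hl := neg_pi_div_two_lt_arcsin.2 hz₁
  have hu := arcsin_lt_pi_div_two.2 hz₂
  constructor
  · rw [lt_div_iff₀ two_pi_pos]; linarith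
  · rw [div_lt_iff₀ two_pi_pos]; linarith

noncomputable def phaseField (k Δ y : ℝ) : ℝ := Δ - 2 * k * sin (2 * π * y)

section phaseField

variable {k Δ s : ℝ}

theorem lipschitzWith_phaseField (k Δ : ℝ) :
    LipschitzWith (‖2 * k‖₊ * ‖2 * π‖₊) (phaseField k Δ) := by
  refine LipschitzWith.of_dist_le_mul fun y z ↦ ?_
  simp only [phaseField, dist_eq, NNReal.coe_mul, coe_nnnorm, norm_eq_abs]
  calc |Δ - 2 * k * sin (2 * π * y) - (Δ - 2 * k * sin (2 * π * z))|
      = |2 * k| * |sin (2 * π * z) - sin (2 * π * y)| := by rw [← abs_mul]; congr 1; ring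
    _ ≤ |2 * k| * |2 * π * z - 2 * π * y| := mul_le_mul_of_nonneg_left (abs_sin_sub_sin_le _ _) (abs_nonneg _)
    _ = |2 * k| * |2 * π| * |y - z| := by
      rw [abs_sub_comm y z, ← abs_mul, ← abs_mul, ← abs_mul]; congr 1; ring

theorem phaseField_self (hΔ : Δ = 2 * k * sin (2 * π * s)) : phaseField k Δ s = 0 := by
  rw [phaseField, hΔ, sub_self]

theorem phaseField_half_sub (hΔ : Δ = 2 * k * sin (2 * π * s)) :
    phaseField k Δ (1 / 2 - s) = 0 := by
  rw [phaseField, hΔ, show 2 * π * (1 / 2 - s) = π - 2 * π * s by ring, sin_pi_sub, sub_self]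

theorem phaseField_neg_half_sub (hΔ : Δ = 2 * k * sin (2 * π * s)) :
    phaseField k Δ (-(1 / 2) - s) = 0 := by
  rw [phaseField, hΔ, show 2 * π * (-(1 / 2) - s) = -(2 * π * s + π) by ring, sin_neg, sin_add_pi,
    neg_neg, sub_self]

theorem phaseField_neg (hk : 0 < k) (hs : -(1 / 4) < s) (hΔ : Δ = 2 * k * sin (2 * π * s))
    {y : ℝ} (hy : y ∈ Ioo s (1 / 2 - s)) : phaseField k Δ y < 0 := by
  have := sin_lt_sin_of_lt_of_lt_pi_sub (θ₀ := 2 * π * s) (θ := 2 * π * y)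
    (by nlinarith [pi_pos]) (by nlinarith [pi_pos, hy.1]) (by nlinarith [pi_pos, hy.2])
  rw [phaseField, hΔ, sub_neg]
  exact mul_lt_mul_of_pos_left this (by positivity)

theorem phaseField_pos (hk : 0 < k) (hs : s < 1 / 4) (hΔ : Δ = 2 * k * sin (2 * π * s))
    {y : ℝ} (hy : y ∈ Ioo (-(1 / 2) - s) s) : 0 < phaseField k Δ y := by
  have := sin_lt_sin_of_lt_of_lt_pi_sub (θ₀ := -(2 * π * s)) (θ := -(2 * π * y))
    (by nlinarith [pi_pos]) (by nlinarith [pi_pos, hy.2]) (by nlinarith [pi_pos, hy.1])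
  rw [sin_neg, sin_neg, neg_lt_neg_iff] at this
  rw [phaseField, hΔ, sub_pos]
  exact mul_lt_mul_of_pos_left this (by positivity)

end phaseField

theorem mismatched_oscillators_phase_synchronize_general
    (k Δ : ℝ) (hΔ : |Δ| < 2 * k)
    (ψstar : ℝ) (hψstar : ψstar = Real.arcsin (Δ / (2 * k)) / (2 * Real.pi))
    (ψ : ℝ → ℝ)
    (hψ : ∀ t : ℝ, 0 ≤ t →
      HasDerivAt ψ (Δ - 2 * k * Real.sin (2 * Real.pi * ψ t)) t)
    (h0 : ψ 0 ∈ Set.Ioo (-(1 / 2) - ψstar) (1 / 2 - ψstar)) :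
    ψstar ∈ Set.Ioo (-(1 / 4) : ℝ) (1 / 4) ∧
    Tendsto ψ atTop (𝓝 ψstar) ∧
    (∀ ε : ℝ, 0 < ε → ε < 1 / 2 → Real.arcsin (|Δ| / (2 * k)) < 2 * Real.pi * ε →
      |ψstar| < ε ∧ ∃ T : ℝ, 0 ≤ T ∧ ∀ t : ℝ, T ≤ t → |ψ t| < ε) := by
  have hk : 0 < 2 * k := (abs_nonneg Δ).trans_lt hΔ
  have hz : |Δ / (2 * k)| < 1 := by rwa [abs_div, abs_of_pos hk, div_lt_one hk]
  have hmem : ψstar ∈ Ioo (-(1 / 4) : ℝ) (1 / 4) := hψstar ▸ arcsin_div_two_pi_mem_Ioo hz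
  have hΔs : Δ = 2 * k * sin (2 * π * ψstar) := by
    rw [hψstar, mul_div_cancel₀ _ two_pi_pos.ne',
      sin_arcsin (abs_le.1 hz.le).1 (abs_le.1 hz.le).2, mul_div_cancel₀ _ hk.ne']
  have htend : Tendsto ψ atTop (𝓝 ψstar) :=
    tendsto_of_pos_on_Ioo_of_neg_on_Ioo (lipschitzWith_phaseField k Δ) hψ
      (phaseField_neg_half_sub hΔs) (phaseField_self hΔs) (phaseField_half_sub hΔs)
      (fun _ ↦ phaseField_pos (by linarith) hmem.2 hΔs)
      (fun _ ↦ phaseField_neg (by linarith) hmem.1 hΔs) h0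
  refine ⟨hmem, htend, fun ε _ _ harc ↦ ?_⟩
  have hψε : |ψstar| < ε := by
    rw [hψstar, abs_div, abs_of_pos two_pi_pos, div_lt_iff₀' two_pi_pos]
    calc |arcsin (Δ / (2 * k))| ≤ arcsin |Δ / (2 * k)| := abs_arcsin_le_arcsin_abs _
      _ = arcsin (|Δ| / (2 * k)) := by rw [abs_div, abs_of_pos hk]
      _ < 2 * π * ε := harc
  obtain ⟨T, hT⟩ := eventually_atTop.1 (htend.abs.eventually (gt_mem_nhds hψε))
  exact ⟨hψε, max T 0, le_max_right T 0, fun t ht ↦ hT t ((le_max_left T 0).trans ht)⟩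

/-- Two diffusively coupled phase oscillators with frequency mismatch
`Δ`, `|Δ| < 2k`, frequency synchronize: the phase difference `ψ`, satisfying
`ψ' = Δ − 2k·sin(2πψ)` with `ψ(0)` in the basin `(−1/2 − ψ*, 1/2 − ψ*)` of the stable
equilibrium `ψ* = arcsin(Δ/(2k))/(2π) ∈ (−1/4, 1/4)`, converges to `ψ*`. In particular,
if `ε ∈ (0, 1/2)` and `arcsin(|Δ|/(2k)) < 2πε`, then `|ψ*| < ε` and eventually
`|ψ(t)| < ε` (the oscillators phase synchronize to within `ε`). -/
theorem mismatched_oscillators_phase_synchronize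
    (k Δ : ℝ) (hk : 0 < k) (hΔ : |Δ| < 2 * k)
    (ψstar : ℝ) (hψstar : ψstar = Real.arcsin (Δ / (2 * k)) / (2 * Real.pi))
    (ψ : ℝ → ℝ)
    (hψ : ∀ t : ℝ, 0 ≤ t →
      HasDerivAt ψ (Δ - 2 * k * Real.sin (2 * Real.pi * ψ t)) t)
    (h0 : ψ 0 ∈ Set.Ioo (-(1 / 2) - ψstar) (1 / 2 - ψstar)) :
    ψstar ∈ Set.Ioo (-(1 / 4) : ℝ) (1 / 4) ∧
    Tendsto ψ atTop (𝓝 ψstar) ∧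
    (∀ ε : ℝ, 0 < ε → ε < 1 / 2 → Real.arcsin (|Δ| / (2 * k)) < 2 * Real.pi * ε →
      |ψstar| < ε ∧ ∃ T : ℝ, 0 ≤ T ∧ ∀ t : ℝ, T ≤ t → |ψ t| < ε) :=
  mismatched_oscillators_phase_synchronize_general k Δ hΔ ψstar hψstar ψ hψ h0
end
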